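/- For all integers r and s, if w is an (r,s)-Dyck word over the alphabet {N,E}, then sw⁻_{r,s}(w) is also an (r,s)-Dyck word. -/
import Mathlib


inductive Letter : Type
  | N : Letter
  | E : Letter
deriving DecidableEq, Repr

/-- weight of a letter: `N` has weight `r`, `E` has weight `s`. -/
def wt (r s : ℤ) : Letter → ℤ
  | Letter.N => r
  | Letter.E => s

/-- Pair each letter of the word with its `(r,s)`-level (east-north convention),
    starting from level `l`.  With `l = 0`, the `i`-th letter `wᵢ` is paired with
    `lᵢ = l_{i-1} + wt wᵢ`. -/
def lvls (r s : ℤ) : ℤ → List Letter → List (Letter × ℤ)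
  | _, [] => []
  | l, c :: w => (c, l + wt r s c) :: lvls r s (l + wt r s c) w

/-- `negBefore k k' = true` iff level `k` is swept before (or equals) level `k'`
    in the negative sweep order `-1, -2, -3, …` then `…, 3, 2, 1, 0`. -/
def negBefore (k k' : ℤ) : Bool :=
  if k < 0 then (if k' < 0 then decide (k' ≤ k) else true)
  else (if k' < 0 then false else decide (k' ≤ k))

/-- `posBefore k k' = true` iff level `k` is swept before (or equals) level `k'`
    in the positive sweep order `0, -1, -2, …` then `…, 3, 2, 1`. -/
def posBefore (k k' : ℤ) : Bool :=
  if k ≤ 0 then (if k' ≤ 0 then decide (k' ≤ k) else true)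
  else (if k' ≤ 0 then false else decide (k' ≤ k))

/-- The negative sweep map `sw⁻_{r,s}`: levels are visited in the order
    `-1, -2, …` then `…, 2, 1, 0`, and each level is scanned right-to-left;
    implemented as a stable sort of the reversed word by the level order. -/
def sweepNeg (r s : ℤ) (w : List Letter) : List Letter :=
  (((lvls r s 0 w).reverse).mergeSort (fun p q => negBefore p.2 q.2)).map Prod.fst

/-- The positive sweep map `sw⁺_{r,s}`: levels are visited in the order
    `0, -1, -2, …` then `…, 3, 2, 1`, and each level is scanned left-to-right;
    implemented as a stable sort of the word by the level order. -/
def sweepPos (r s : ℤ) (w : List Letter) : List Letter :=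
  ((lvls r s 0 w).mergeSort (fun p q => posBefore p.2 q.2)).map Prod.fst

/-- The transposition map `flip`, interchanging `N` and `E`. -/
def flipL : Letter → Letter
  | Letter.N => Letter.E
  | Letter.E => Letter.N

/-- A word is an `(r,s)`-Dyck word iff all of its levels `lᵢ` (`i ≥ 1`) are nonnegative. -/
def IsDyckWord (r s : ℤ) (w : List Letter) : Prop :=
  ∀ p ∈ lvls r s 0 w, 0 ≤ p.2

lemma negBefore_le {a b : ℤ} (ha : 0 ≤ a) (hb : 0 ≤ b) (h : negBefore a b = true) : b ≤ a := by
  simp only [negBefore] at h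
  split_ifs at h <;> simp at h <;> omega

lemma lvls_mem_snd (r s : ℤ) :
    ∀ (v : List Letter) (c : ℤ) (p : Letter × ℤ), p ∈ lvls r s c v →
      ∃ n, p.2 = c + ((v.take n).map (wt r s)).sum := by
  intro v
  induction v with
  | nil => intro c p hp; simp [lvls] at hp
  | cons x v ih =>
    intro c p hp
    simp only [lvls, List.mem_cons] at hp
    rcases hp with h | h
    · exact ⟨1, by simp [h]⟩
    · obtain ⟨n, hn⟩ := ih (c + wt r s x) p h
      exact ⟨n + 1, by simp [hn]; ring⟩

lemma lemC (r s t : ℤ) (σ : Letter → Bool) :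
    ∀ (w : List Letter) (c : ℤ),
      min 0 (t - c) ≤ (((lvls r s c w).filter
        (fun p => decide (t < p.2) || (decide (p.2 = t) && σ p.1))).map
          (fun p => wt r s p.1)).sum := by
  intro w
  induction w with
  | nil => intro c; simp [lvls]
  | cons x w ih =>
    intro c
    have H := ih (c + wt r s x)
    simp only [lvls, List.filter_cons]
    by_cases h1 : t < c + wt r s x
    · simp [h1]
      omega
    · by_cases h2 : c + wt r s x = t
      · rw [h2] at H
        by_cases h3 : σ x = true
        · simp [h1, h2, h3]
          omega
        · simp [h1, h2, h3]
          omega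
      · simp [h1, h2]
        omega

lemma lemF (r s t : ℤ) (σ : Letter → Bool) :
    ∀ (l : List (Letter × ℤ)),
      ((l.filter (fun p => decide (t < p.2) || (decide (p.2 = t) && σ p.1))).map
          (fun p => wt r s p.1)).sum
        = ((l.filter (fun p => decide (t < p.2))).map (fun p => wt r s p.1)).sum
          + (if σ Letter.N then (l.count (Letter.N, t) : ℤ) * r else 0)
          + (if σ Letter.E then (l.count (Letter.E, t) : ℤ) * s else 0) := by
  have hwN : wt r s Letter.N = r := rfl
  have hwE : wt r s Letter.E = s := rfl
  intro l
  induction l with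
  | nil => simp
  | cons p l ih =>
    obtain ⟨x, k⟩ := p
    by_cases h1 : t < k
    · have h2 : ¬ k = t := by omega
      simp [List.filter_cons, List.count_cons, h1, h2, ih]
      split_ifs <;> ring
    · by_cases h2 : k = t
      · subst h2
        cases x with
        | N =>
          by_cases h3 : σ Letter.N = true
          · simp [List.filter_cons, List.count_cons, h1, h3, ih, hwN]
            split_ifs <;> ring
          · simp [List.filter_cons, List.count_cons, h1, h3, ih]
        | E =>
          by_cases h3 : σ Letter.E = true
          · simp [List.filter_cons, List.count_cons, h1, h3, ih, hwE]
            split_ifs <;> ring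
          · simp [List.filter_cons, List.count_cons, h1, h3, ih]
      · simp [List.filter_cons, List.count_cons, h1, h2, ih]

lemma lemH (r s t : ℤ) :
    ∀ (l : List (Letter × ℤ)),
      ((l.filter (fun p => decide (p.2 = t))).map (fun p => wt r s p.1)).sum
        = (l.count (Letter.N, t) : ℤ) * r + (l.count (Letter.E, t) : ℤ) * s := by
  have hwN : wt r s Letter.N = r := rfl
  have hwE : wt r s Letter.E = s := rfl
  intro l
  induction l with
  | nil => simp
  | cons p l ih =>
    obtain ⟨x, k⟩ := p
    by_cases h2 : k = t
    · subst h2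
      cases x with
      | N =>
        simp [List.filter_cons, List.count_cons, ih, hwN]
        ring
      | E =>
        simp [List.filter_cons, List.count_cons, ih, hwE]
        ring
    · simp [List.filter_cons, List.count_cons, h2, ih]

/-- If `w` is an `(r,s)`-Dyck word, then `sw⁻_{r,s}(w)` is an `(r,s)`-Dyck word. -/
theorem sweepNeg_isDyckWord (r s : ℤ) (w : List Letter) (hw : IsDyckWord r s w) :
    IsDyckWord r s (sweepNeg r s w) := by
  classical
  intro p hp
  -- abstract the sorted list M
  obtain ⟨M, hperm, hsort, hp⟩ :
      ∃ M : List (Letter × ℤ), M.Perm (lvls r s 0 w)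
        ∧ M.Pairwise (fun a b => negBefore a.2 b.2 = true)
        ∧ p ∈ lvls r s 0 (M.map Prod.fst) := by
    refine ⟨((lvls r s 0 w).reverse).mergeSort (fun p q => negBefore p.2 q.2),
      (List.mergeSort_perm _ _).trans (List.reverse_perm _), ?_, hp⟩
    refine List.pairwise_mergeSort ?_ ?_ _
    · intro a b c h1 h2
      simp only [negBefore] at *
      split_ifs at * <;> simp_all <;> omega
    · intro a b
      simp only [negBefore]
      split_ifs <;> simp_all <;> omega
  have hMnn : ∀ q ∈ M, 0 ≤ q.2 := fun q hq => hw q (hperm.mem_iff.mp hq)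
  obtain ⟨n, hn⟩ := lvls_mem_snd r s (M.map Prod.fst) 0 p hp
  -- abstract the prefix P and suffix Q
  obtain ⟨P, Q, hPQ, hsum⟩ :
      ∃ P Q : List (Letter × ℤ), P ++ Q = M
        ∧ p.2 = (P.map (fun q => wt r s q.1)).sum := by
    refine ⟨M.take n, M.drop n, List.take_append_drop n M, ?_⟩
    rw [hn, zero_add, ← List.map_take, List.map_map]
    rfl
  subst hPQ
  rw [hsum]
  by_cases hP0 : P = []
  · simp [hP0]
  -- last element of P, threshold t
  set L : List (Letter × ℤ) := lvls r s 0 w with hLdef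
  set t : ℤ := (P.getLast hP0).2 with htdef
  obtain ⟨hsP, hsQ, hcross⟩ := List.pairwise_append.mp hsort
  have hplP : P.getLast hP0 ∈ P := List.getLast_mem hP0
  have hPmem : ∀ q ∈ P, q ∈ P ++ Q := fun q hq => List.mem_append_left _ hq
  have hQmem : ∀ q ∈ Q, q ∈ P ++ Q := fun q hq => List.mem_append_right _ hq
  have ht0 : 0 ≤ t := hMnn _ (hPmem _ hplP)
  -- all elements of P have level ≥ t
  have hPt : ∀ q ∈ P, t ≤ q.2 := by
    intro q hq
    have hsplit := List.dropLast_append_getLast hP0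
    rcases List.mem_append.mp (hsplit ▸ hq) with h | h
    · have hpw := List.pairwise_append.mp (hsplit ▸ hsP)
      have := hpw.2.2 q h (P.getLast hP0) (List.mem_singleton_self _)
      exact negBefore_le (hMnn q (hPmem q hq)) ht0 this
    · rw [List.mem_singleton.mp h]
  -- all elements of Q have level ≤ t
  have hQt : ∀ q ∈ Q, q.2 ≤ t := by
    intro q hq
    have := hcross (P.getLast hP0) hplP q hq
    exact negBefore_le ht0 (hMnn q (hQmem q hq)) this
  -- split the sum over P into the part with level > t and level = t
  set f : Letter × ℤ → ℤ := fun q => wt r s q.1 with hfdef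
  set pred0 : Letter × ℤ → Bool := fun p => decide (t < p.2) with hpred0
  have hsplitP : (P.map f).sum
      = ((P.filter pred0).map f).sum + ((P.filter (fun p => !pred0 p)).map f).sum := by
    have hpm := (List.filter_append_perm pred0 P).map f
    rw [← hpm.sum_eq, List.map_append, List.sum_append]
  have hfilterP : P.filter (fun p => !pred0 p) = P.filter (fun p => decide (p.2 = t)) := by
    apply List.filter_congr
    intro x hx
    have h1 := hPt x hx
    by_cases h2 : t < x.2
    · simp [hpred0, h2]; omega
    · simp [hpred0, h2]; omega
  -- the part with level > t equals the corresponding sum over all of L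
  have hQfilter : Q.filter pred0 = [] := by
    rw [List.filter_eq_nil_iff]
    intro q hq
    have := hQt q hq
    simp [hpred0]
    omega
  have hLP : ((L.filter pred0).map f).sum = ((P.filter pred0).map f).sum := by
    have hperm2 : L.Perm (P ++ Q) := hperm.symm
    have h3 := (hperm2.filter pred0).map f
    rw [h3.sum_eq, List.filter_append, hQfilter, List.append_nil]
  -- counts
  have hcount : ∀ a : Letter × ℤ, P.count a ≤ L.count a := by
    intro a
    have h5 : List.count a (P ++ Q) = List.count a L := hperm.countP_eq _
    exact le_trans ((List.sublist_append_left P Q).count_le a) (le_of_eq h5)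
  set A : ℤ := ((L.filter pred0).map f).sum with hAdef
  set cN : ℤ := (L.count (Letter.N, t) : ℤ) with hcN
  set cE : ℤ := (L.count (Letter.E, t) : ℤ) with hcE
  set jN : ℤ := (P.count (Letter.N, t) : ℤ) with hjN
  set jE : ℤ := (P.count (Letter.E, t) : ℤ) with hjE
  -- the four extreme inequalities from lemC + lemF
  have key : ∀ σ : Letter → Bool,
      0 ≤ A + (if σ Letter.N then cN * r else 0) + (if σ Letter.E then cE * s else 0) := by
    intro σ
    have h1 := lemC r s t σ w 0
    have h2 := lemF r s t σ L
    rw [h2] at h1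
    have h4 : min 0 (t - 0) = 0 := by omega
    rw [h4] at h1
    exact h1
  have hA : 0 ≤ A := by have := key (fun _ => false); simpa using this
  have hAN : 0 ≤ A + cN * r := by have := key (fun x => decide (x = Letter.N)); simpa using this
  have hAE : 0 ≤ A + cE * s := by have := key (fun x => decide (x = Letter.E)); simpa using this
  have hANE : 0 ≤ A + cN * r + cE * s := by have := key (fun _ => true); simpa using this
  -- value of the sum over P
  have hval : (P.map f).sum = A + jN * r + jE * s := by
    rw [hsplitP, hfilterP, ← hLP, lemH r s t P]
    ring
  rw [hval]
  have hjNle : jN ≤ cN := by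
    rw [hjN, hcN]; exact_mod_cast hcount (Letter.N, t)
  have hjEle : jE ≤ cE := by
    rw [hjE, hcE]; exact_mod_cast hcount (Letter.E, t)
  have hjN0 : 0 ≤ jN := by positivity
  have hjE0 : 0 ≤ jE := by positivity
  clear_value A cN cE jN jE
  rcases le_total 0 r with hr | hr <;> rcases le_total 0 s with hs | hs
  · nlinarith
  · nlinarith [mul_le_mul_of_nonpos_right hjEle hs]
  · nlinarith [mul_le_mul_of_nonpos_right hjNle hr]
  · nlinarith [mul_le_mul_of_nonpos_right hjNle hr, mul_le_mul_of_nonpos_right hjEle hs]
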